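/- For all n×n real symmetric matrices A and B, Tr(ABAB) ≤ Tr(A²B²). -/

import Mathlib

/-! The commutator `C = AB - BA` of two symmetric matrices is skew-symmetric, so
`0 ≤ Tr(Cᵀ C) = -Tr(C²) = 2 Tr(A²B²) - 2 Tr(ABAB)`. -/

namespace Matrix

variable {m n R : Type*} [Fintype m] [Fintype n]

theorem trace_transpose_mul_self_nonneg [Ring R] [LinearOrder R] [IsOrderedRing R]
    (C : Matrix m n R) : 0 ≤ (Cᵀ * C).trace := by
  rw [← vec_dotProduct_vec]
  exact Finset.sum_nonneg fun _ _ => mul_self_nonneg _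

variable [CommRing R]

theorem IsSymm.transpose_commutator {A B : Matrix n n R} (hA : A.IsSymm) (hB : B.IsSymm) :
    (A * B - B * A)ᵀ = -(A * B - B * A) := by
  rw [transpose_sub, transpose_mul, transpose_mul, hA.eq, hB.eq, neg_sub]

theorem trace_commutator_mul_self (A B : Matrix n n R) :
    ((A * B - B * A) * (A * B - B * A)).trace
      = 2 * (A * B * A * B).trace - 2 * (A * A * B * B).trace := by
  have hABBA : (A * B * (B * A)).trace = (A * A * B * B).trace := by
    simpa only [mul_assoc] using trace_mul_comm (A * B * B) A
  have hBAAB : (B * A * (A * B)).trace = (A * A * B * B).trace := by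
    simpa only [mul_assoc] using trace_mul_comm B (A * A * B)
  have hBABA : (B * A * (B * A)).trace = (A * B * A * B).trace := by
    simpa only [mul_assoc] using trace_mul_comm B (A * B * A)
  rw [sub_mul, mul_sub, mul_sub, trace_sub, trace_sub, trace_sub, hABBA, hBAAB, hBABA,
    ← mul_assoc]
  ring

end Matrix

theorem trace_symm_ineq {n : ℕ} (A B : Matrix (Fin n) (Fin n) ℝ)
    (hA : A.IsSymm) (hB : B.IsSymm) :
    (A * B * A * B).trace ≤ (A * A * B * B).trace := by
  have h := Matrix.trace_transpose_mul_self_nonneg (A * B - B * A)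
  rw [hA.transpose_commutator hB, neg_mul, Matrix.trace_neg,
    Matrix.trace_commutator_mul_self] at h
  linarith
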